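/- There exist a sequence of probability measures ν_k on {0,1}^∞, a probability measure μ, and two sequences of positive weights (w_k) and (w'_k), each summing to 1, such that ν := ∑_k w_k ν_k predicts μ in expected average KL divergence (d_n(μ,ν) = O(log n)) while ν' := ∑_k w'_k ν_k does not: d_n(μ,ν') ≥ n − 1 for all n. -/

import Mathlib

open MeasureTheory Filter Real
open scoped ENNReal

/-- The cylinder set of all infinite sequences starting with the string `s`. -/
def cyl {X : Type*} [MeasurableSpace X] {n : ℕ} (s : Fin n → X) : Set (ℕ → X) :=
  {x | ∀ i : Fin n, x i = s i}

/-- The expected cumulative KL divergence between `μ` and `ρ` restricted to the first `n`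
observations. -/
noncomputable def dKL {X : Type*} [Fintype X] [MeasurableSpace X]
    (μ ρ : Measure (ℕ → X)) (n : ℕ) : ℝ :=
  -∑ s : Fin n → X, (μ (cyl s)).toReal * Real.logb 2 ((ρ (cyl s)).toReal / (μ (cyl s)).toReal)

/-!
Take `ν k` the Dirac mass at the sequence of `k` `false`s followed by `true`s and `μ` the Dirac
mass at the all-`false` sequence. Since `μ` is a Dirac mass, `d_n(μ, ρ) = -log ρ(cyl 0ⁿ)`, and
under `∑ w k • ν k` the cylinder `cyl 0ⁿ` has mass exactly the tail `∑_{k ≥ n} w k`. Prescribing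
the tails as `1 / (n + 1)` and `2⁻ⁿ` gives `d_n = log (n + 1) = O(log n)` and `d_n = n`.
-/

open Set
open scoped Topology

section Cylinders

variable {X : Type*} [MeasurableSpace X] [MeasurableSingletonClass X]

lemma measurableSet_cyl {n : ℕ} (s : Fin n → X) : MeasurableSet (cyl s) := by
  have : cyl s = ⋂ i : Fin n, (fun x : ℕ → X => x i) ⁻¹' {s i} := by
    ext x
    simp [cyl]
  rw [this]
  exact .iInter fun i => measurable_pi_apply (i : ℕ) (measurableSet_singleton (s i))

lemma dKL_dirac [Fintype X] (a : ℕ → X) (ρ : Measure (ℕ → X)) (n : ℕ) :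
    dKL (Measure.dirac a) ρ n = -logb 2 (ρ (cyl fun i : Fin n => a i)).toReal := by
  classical
  unfold dKL
  rw [Finset.sum_eq_single (fun i : Fin n => a i)]
  · rw [Measure.dirac_apply_of_mem (show a ∈ cyl fun i : Fin n => a i from fun _ => rfl)]
    simp
  · intro s _ hs
    have ha : a ∉ cyl s := fun h => hs (funext fun i => (h i).symm)
    simp [Measure.dirac_apply' a (measurableSet_cyl s), ha]
  · exact fun h => absurd (Finset.mem_univ _) h

end Cylinders

lemma MeasureTheory.Measure.sum_smul_dirac_apply {α ι : Type*} [MeasurableSpace α] (w : ι → ℝ≥0∞)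
    (a : ι → α) {S : Set α} (hS : MeasurableSet S) :
    (Measure.sum fun k => w k • Measure.dirac (a k)) S = ∑' k, (a ⁻¹' S).indicator w k := by
  rw [Measure.sum_apply _ hS]
  refine tsum_congr fun k => ?_
  by_cases hk : a k ∈ S <;> simp [Measure.dirac_apply' _ hS, hk]

lemma HasSum.indicator_Ici {M : Type*} [AddCommMonoid M] [TopologicalSpace M] [ContinuousAdd M]
    {f : ℕ → M} {n : ℕ} {m : M} (h : HasSum (fun k => f (k + n)) m) :
    HasSum ((Ici n).indicator f) m := by
  have h' : HasSum (fun k => (Ici n).indicator f (k + n)) m := by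
    simpa [indicator_of_mem] using h
  simpa [Finset.sum_eq_zero fun i hi =>
    indicator_of_notMem (notMem_Ici.2 (Finset.mem_range.1 hi)) f]
    using h'.sum_range_add

lemma hasSum_sub_succ {g : ℕ → ℝ} (hg : Antitone g) (hlim : Tendsto g atTop (𝓝 0)) :
    HasSum (fun k => g k - g (k + 1)) (g 0) := by
  rw [hasSum_iff_tendsto_nat_of_nonneg (fun k => sub_nonneg.2 (hg k.le_succ))]
  simp_rw [Finset.sum_range_sub']
  simpa using tendsto_const_nhds.sub hlim

/-- When `g` decreases to `0`, these weights have tail masses `∑_{k ≥ n} w k = g n`. -/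
noncomputable def weightsOfTail (g : ℕ → ℝ) (k : ℕ) : ℝ≥0∞ :=
  ENNReal.ofReal (g k - g (k + 1))

section WeightsOfTail

variable {g : ℕ → ℝ}

lemma weightsOfTail_pos (hg : StrictAnti g) (k : ℕ) : 0 < weightsOfTail g k :=
  ENNReal.ofReal_pos.2 (sub_pos.2 (hg k.lt_succ_self))

lemma hasSum_weightsOfTail_nat_add (hg : Antitone g) (hlim : Tendsto g atTop (𝓝 0)) (n : ℕ) :
    HasSum (fun k => weightsOfTail g (k + n)) (ENNReal.ofReal (g n)) := by
  have hshift : HasSum (fun k => g (k + n) - g (k + n + 1)) (g n) := by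
    simpa [Nat.add_right_comm] using
      hasSum_sub_succ (hg.comp_monotone fun _ _ h => Nat.add_le_add_right h n)
        (hlim.comp (tendsto_add_atTop_nat n))
  rw [← hshift.tsum_eq, ENNReal.ofReal_tsum_of_nonneg (fun k => sub_nonneg.2 (hg (k + n).le_succ))
    hshift.summable]
  exact ENNReal.summable.hasSum

lemma tsum_weightsOfTail (hg : Antitone g) (hlim : Tendsto g atTop (𝓝 0)) (h0 : g 0 = 1) :
    ∑' k, weightsOfTail g k = 1 := by
  simpa [h0] using (hasSum_weightsOfTail_nat_add hg hlim 0).tsum_eq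

end WeightsOfTail

def zerosThenOnes (k : ℕ) : ℕ → Bool := fun i => decide (k ≤ i)

lemma zerosThenOnes_preimage_cyl_false (n : ℕ) :
    zerosThenOnes ⁻¹' cyl (fun _ : Fin n => false) = Ici n := by
  ext k
  simp only [mem_preimage, cyl, zerosThenOnes, mem_ofPred_eq, decide_eq_false_iff_not, not_le,
    mem_Ici]
  exact ⟨fun h => by_contra fun hk => (h ⟨k, by omega⟩).false.elim, fun h i => by omega⟩

lemma dKL_dirac_false_mixture {g : ℕ → ℝ} (hg : Antitone g) (hlim : Tendsto g atTop (𝓝 0))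
    (n : ℕ) :
    dKL (Measure.dirac fun _ => false)
      (Measure.sum fun k => weightsOfTail g k • Measure.dirac (zerosThenOnes k)) n
      = -logb 2 (g n) := by
  rw [dKL_dirac, Measure.sum_smul_dirac_apply _ _ (measurableSet_cyl _),
    zerosThenOnes_preimage_cyl_false,
    (hasSum_weightsOfTail_nat_add hg hlim n).indicator_Ici.tsum_eq,
    ENNReal.toReal_ofReal (hg.le_of_tendsto hlim n)]

lemma logb_add_one_le_two_mul_logb {x : ℝ} (hx : 2 ≤ x) : logb 2 (x + 1) ≤ 2 * logb 2 x := by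
  calc logb 2 (x + 1) ≤ logb 2 (x ^ 2) := logb_le_logb_of_le one_lt_two (by linarith) (by nlinarith)
    _ = 2 * logb 2 x := by rw [logb_pow, Nat.cast_ofNat]

/-- Weights matter for prediction in expected average KL divergence: there are measures `ν_k`,
a measure `μ`, and two sequences of positive weights summing to one such that the first mixture
predicts `μ` (with `d_n(μ,ν) = O(log n)`) while the second does not (`d_n(μ,ν') ≥ n - 1`). -/
theorem stmt11 :
    ∃ (νs : ℕ → Measure (ℕ → Bool)) (μ : Measure (ℕ → Bool)) (w w' : ℕ → ℝ≥0∞),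
      (∀ k, IsProbabilityMeasure (νs k)) ∧ IsProbabilityMeasure μ ∧
      (∀ k, 0 < w k) ∧ (∑' k, w k = 1) ∧ (∀ k, 0 < w' k) ∧ (∑' k, w' k = 1) ∧
      (∃ K : ℝ, ∀ n : ℕ, 2 ≤ n →
        dKL μ (Measure.sum fun k => w k • νs k) n ≤ K * Real.logb 2 n) ∧
      (∀ n : ℕ, (n : ℝ) - 1 ≤ dKL μ (Measure.sum fun k => w' k • νs k) n) := by
  set g : ℕ → ℝ := fun k => 1 / ((k : ℝ) + 1)
  set g' : ℕ → ℝ := fun k => 2⁻¹ ^ k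
  have hg : StrictAnti g := fun _ _ hab => by
    simp only [g]
    gcongr
  have hg' : StrictAnti g' := fun _ _ hab =>
    pow_lt_pow_right_of_lt_one₀ (by norm_num) (by norm_num) hab
  have hlim : Tendsto g atTop (𝓝 0) := tendsto_one_div_add_atTop_nhds_zero_nat
  have hlim' : Tendsto g' atTop (𝓝 0) :=
    tendsto_pow_atTop_nhds_zero_of_lt_one (by norm_num) (by norm_num)
  refine ⟨fun k => Measure.dirac (zerosThenOnes k), Measure.dirac fun _ => false,
    weightsOfTail g, weightsOfTail g', fun _ => inferInstance, inferInstance,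
    weightsOfTail_pos hg, tsum_weightsOfTail hg.antitone hlim (by simp [g]),
    weightsOfTail_pos hg', tsum_weightsOfTail hg'.antitone hlim' (by simp [g']),
    ⟨2, fun n hn => ?_⟩, fun n => ?_⟩
  · rw [dKL_dirac_false_mixture hg.antitone hlim]
    simp only [g, one_div, logb_inv, neg_neg]
    exact logb_add_one_le_two_mul_logb (by exact_mod_cast hn)
  · rw [dKL_dirac_false_mixture hg'.antitone hlim']
    simp only [g', logb_pow, logb_inv, logb_self_eq_one one_lt_two]
    linarith
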